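/- arXiv:1504.02375 — 4 statements merged into one kernel-verified Lean document; each statement's English description precedes it below -/
import Mathlib

section
/- Let γ : ℤ → ℝ≥0 satisfy ∑_{j∈ℤ} √γ(j) < ∞, and let {T_j}_{j∈ℤ} be bounded operators on a Hilbert space H with ‖T_j* T_k‖ + ‖T_j T_k*‖ ≤ γ(j − k) for all j,k. Then the partial sums ∑_{|j|≤N} T_j are uniformly bounded in operator norm by ∑_{j∈ℤ} √γ(j). -/
/-!
Let `‖T j⋆ T k‖, ‖T j T k⋆‖ ≤ w j k ^ 2` and `S = ∑ j ∈ F, T j`. In a C⋆-ring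
`‖S‖ ^ (2 * 2 ^ m) = ‖(S⋆ S) ^ 2 ^ m‖`, and `(S⋆ S) ^ n` expands into the sum of the words
`T j₁⋆ T j₂ T j₃⋆ ⋯ T j₂ₙ` with letters in `F`. Grouping a word as `(j₁ j₂)(j₃ j₄)⋯` or as
`j₁ (j₂ j₃)⋯ j₂ₙ` bounds its norm in two ways (the single letters obey `‖T j‖ ≤ w j j ≤ C`), and the
geometric mean of the two bounds is `C * ∏ w jᵢ jᵢ₊₁`. The row-sum bound `∑ k, w j k ≤ C` makes the
sum of these over all words at most `#F * C ^ (2 * n)`, and the factor `#F` disappears on taking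
`2n`-th roots as `n → ∞`. For the theorem, `w j k = √(γ (j - k))` and `C = ∑' j, √(γ j)`.
-/

open scoped NNReal
open Filter

theorem NNReal.le_of_frequently_pow_le_mul_pow {x y K : ℝ≥0}
    (h : ∃ᶠ n in atTop, x ^ n ≤ K * y ^ n) : x ≤ y := by
  by_contra! hyx
  have hev : ∀ᶠ n in atTop, K * y ^ n < x ^ n := by
    rcases eq_or_ne y 0 with rfl | hy
    · filter_upwards [eventually_ne_atTop 0] with n hn
      simpa [zero_pow hn] using pow_pos hyx n
    · have hxy : 1 < x / y := (one_lt_div (pos_iff_ne_zero.mpr hy)).mpr hyx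
      filter_upwards [(tendsto_pow_atTop_atTop_of_one_lt hxy).eventually_gt_atTop K] with n hn
      rwa [div_pow, lt_div_iff₀ (pow_pos (pos_iff_ne_zero.mpr hy) n)] at hn
  obtain ⟨n, hle, hlt⟩ := (h.and_eventually hev).exists
  exact hle.not_gt hlt

namespace CStarRing

variable {A : Type*} [NormedRing A] [StarRing A] [CStarRing A]

theorem nnnorm_one_le : ‖(1 : A)‖₊ ≤ 1 := by
  rcases subsingleton_or_nontrivial A with _ | _
  · simp [Subsingleton.elim (1 : A) 0]
  · exact nnnorm_one.le

theorem nnnorm_le_of_nnnorm_star_mul_self_pow_le {a : A} {K C : ℝ≥0}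
    (h : ∀ n, 0 < n → ‖(star a * a) ^ n‖₊ ≤ K * C ^ (2 * n)) : ‖a‖₊ ≤ C := by
  refine NNReal.le_of_frequently_pow_le_mul_pow (K := K) <|
    ((tendsto_pow_atTop_atTop_of_one_lt one_lt_two).comp (tendsto_add_atTop_nat 1)).frequently
      (Frequently.of_forall fun m => ?_)
  have hpow : ‖a‖₊ ^ 2 ^ (m + 1) = ‖(star a * a) ^ 2 ^ m‖₊ := by
    rw [(IsSelfAdjoint.star_mul_self a).nnnorm_pow_two_pow, CStarRing.nnnorm_star_mul_self,
      ← sq, ← pow_mul, ← pow_succ']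
  show ‖a‖₊ ^ 2 ^ (m + 1) ≤ K * C ^ 2 ^ (m + 1)
  rw [hpow, pow_succ']
  exact h (2 ^ m) (Nat.two_pow_pos m)

end CStarRing

namespace CotlarStein

variable {ι : Type*}

section WordSum

variable {M : Type*}

noncomputable def wordSum [AddCommMonoid M] (F : Finset ι) : ℕ → (List ι → M) → M
  | 0, g => g []
  | m + 1, g => ∑ j ∈ F, wordSum F m fun l => g (j :: l)

variable (F : Finset ι)

theorem mul_wordSum [NonUnitalNonAssocSemiring M] (c : M) :
    ∀ (m : ℕ) (g : List ι → M), c * wordSum F m g = wordSum F m fun l => c * g l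
  | 0, _ => rfl
  | m + 1, g => by
    simp only [wordSum, Finset.mul_sum, mul_wordSum c m]

theorem nnnorm_wordSum_le [SeminormedAddCommGroup M] :
    ∀ (m : ℕ) (g : List ι → M), ‖wordSum F m g‖₊ ≤ wordSum F m fun l => ‖g l‖₊
  | 0, _ => le_rfl
  | m + 1, g => (nnnorm_sum_le _ _).trans <|
      Finset.sum_le_sum fun j _ => nnnorm_wordSum_le m fun l => g (j :: l)

theorem wordSum_mono [AddCommMonoid M] [PartialOrder M] [IsOrderedAddMonoid M] :
    ∀ (m : ℕ) {g h : List ι → M}, g ≤ h → wordSum F m g ≤ wordSum F m h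
  | 0, _, _, hgh => hgh []
  | m + 1, _, _, hgh => Finset.sum_le_sum fun j _ => wordSum_mono m fun l => hgh (j :: l)

end WordSum

section Weights

variable (w : ι → ι → ℝ≥0) (C : ℝ≥0)

noncomputable def chainWeight : List ι → ℝ≥0
  | [] => 1
  | [_] => 1
  | j :: k :: l => w j k * chainWeight (k :: l)

noncomputable def pairWeight : List ι → ℝ≥0
  | [] => 1
  | [_] => C
  | j :: k :: l => w j k ^ 2 * pairWeight l

theorem pairWeight_cons_mul_pairWeight :
    ∀ (j : ι) (l : List ι),
      pairWeight w C (j :: l) * pairWeight w C l = C * chainWeight w (j :: l) ^ 2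
  | _, [] => by simp [pairWeight, chainWeight]
  | j, k :: l => by
    rw [pairWeight, chainWeight, mul_pow, mul_left_comm, ← pairWeight_cons_mul_pairWeight k l]
    ring

theorem wordSum_chainWeight_le {F : Finset ι} (hrow : ∀ j, ∑ k ∈ F, w j k ≤ C) :
    ∀ (m : ℕ) (j : ι), wordSum F m (fun l => chainWeight w (j :: l)) ≤ C ^ m
  | 0, _ => by simp [wordSum, chainWeight]
  | m + 1, j =>
    calc ∑ k ∈ F, wordSum F m (fun l => w j k * chainWeight w (k :: l))
        ≤ ∑ k ∈ F, w j k * C ^ m := Finset.sum_le_sum fun k _ => by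
          rw [← mul_wordSum]; gcongr; exact wordSum_chainWeight_le hrow m k
      _ ≤ C ^ (m + 1) := by
          rw [← Finset.sum_mul, pow_succ']; gcongr; exact hrow j

end Weights

section AltProd

variable {A : Type*} [Semiring A] [StarRing A]

noncomputable def altProd (T : ι → A) : Bool → List ι → A
  | _, [] => 1
  | false, j :: l => T j * altProd T true l
  | true, j :: l => star (T j) * altProd T false l

theorem star_sum_mul_sum_pow_eq_wordSum (F : Finset ι) (T : ι → A) :
    ∀ n : ℕ, (star (∑ j ∈ F, T j) * ∑ j ∈ F, T j) ^ n = wordSum F (2 * n) (altProd T true)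
  | 0 => by rw [pow_zero]; rfl
  | n + 1 => by
    rw [pow_succ', star_sum_mul_sum_pow_eq_wordSum F T n, star_sum, Finset.sum_mul_sum,
      Finset.sum_mul]
    show _ = ∑ j ∈ F, ∑ k ∈ F, wordSum F (2 * n) fun l => altProd T true (j :: k :: l)
    simp only [Finset.sum_mul]
    simp only [mul_wordSum, altProd, mul_assoc]

end AltProd

section CStarRing

variable {A : Type*} [NormedRing A] [StarRing A] [CStarRing A]

structure AlmostOrthogonal (T : ι → A) (w : ι → ι → ℝ≥0) : Prop where
  star_mul_le : ∀ j k, ‖star (T j) * T k‖₊ ≤ w j k ^ 2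
  mul_star_le : ∀ j k, ‖T j * star (T k)‖₊ ≤ w j k ^ 2

variable {T : ι → A} {w : ι → ι → ℝ≥0} {C : ℝ≥0}

namespace AlmostOrthogonal

theorem nnnorm_le (hT : AlmostOrthogonal T w) (j : ι) : ‖T j‖₊ ≤ w j j := by
  rw [← sq_le_sq₀ zero_le zero_le, sq, ← CStarRing.nnnorm_star_mul_self]
  exact hT.star_mul_le j j

theorem nnnorm_altProd_cons_le_mul (hT : AlmostOrthogonal T w) (hdiag : ∀ j, w j j ≤ C)
    (b : Bool) (j : ι) (l : List ι) :
    ‖altProd T b (j :: l)‖₊ ≤ C * ‖altProd T (!b) l‖₊ := by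
  have hj : ‖T j‖₊ ≤ C := (hT.nnnorm_le j).trans (hdiag j)
  cases b
  · exact (nnnorm_mul_le _ _).trans (mul_le_mul_of_nonneg_right hj zero_le)
  · exact (nnnorm_mul_le _ _).trans <| by
      rw [nnnorm_star]; exact mul_le_mul_of_nonneg_right hj zero_le

theorem nnnorm_altProd_le_pairWeight (hT : AlmostOrthogonal T w) (hdiag : ∀ j, w j j ≤ C) :
    ∀ (b : Bool) (l : List ι), ‖altProd T b l‖₊ ≤ pairWeight w C l
  | _, [] => CStarRing.nnnorm_one_le
  | b, [j] => by
    refine (hT.nnnorm_altProd_cons_le_mul hdiag b j []).trans ?_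
    rw [altProd, pairWeight]
    exact mul_le_of_le_one_right' CStarRing.nnnorm_one_le
  | false, j :: k :: l => by
    rw [altProd, altProd, ← mul_assoc, pairWeight]
    exact (nnnorm_mul_le _ _).trans <|
      mul_le_mul' (hT.mul_star_le j k) (hT.nnnorm_altProd_le_pairWeight hdiag false l)
  | true, j :: k :: l => by
    rw [altProd, altProd, ← mul_assoc, pairWeight]
    exact (nnnorm_mul_le _ _).trans <|
      mul_le_mul' (hT.star_mul_le j k) (hT.nnnorm_altProd_le_pairWeight hdiag true l)

theorem nnnorm_altProd_cons_le (hT : AlmostOrthogonal T w) (hdiag : ∀ j, w j j ≤ C)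
    (b : Bool) (j : ι) (l : List ι) :
    ‖altProd T b (j :: l)‖₊ ≤ C * chainWeight w (j :: l) := by
  have hsq : ‖altProd T b (j :: l)‖₊ ^ 2 ≤ (C * chainWeight w (j :: l)) ^ 2 :=
    calc ‖altProd T b (j :: l)‖₊ ^ 2
        ≤ pairWeight w C (j :: l) * (C * pairWeight w C l) := by
          rw [sq]
          refine mul_le_mul' (hT.nnnorm_altProd_le_pairWeight hdiag b (j :: l)) ?_
          refine (hT.nnnorm_altProd_cons_le_mul hdiag b j l).trans ?_
          gcongr
          exact hT.nnnorm_altProd_le_pairWeight hdiag _ l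
      _ = (C * chainWeight w (j :: l)) ^ 2 := by
          rw [mul_left_comm, pairWeight_cons_mul_pairWeight]; ring
  exact (pow_le_pow_iff_left₀ zero_le zero_le two_ne_zero).mp hsq

theorem nnnorm_wordSum_altProd_le (hT : AlmostOrthogonal T w) (hdiag : ∀ j, w j j ≤ C)
    {F : Finset ι} (hrow : ∀ j, ∑ k ∈ F, w j k ≤ C) (b : Bool) (m : ℕ) :
    ‖wordSum F (m + 1) (altProd T b)‖₊ ≤ F.card * C ^ (m + 1) :=
  calc ‖∑ j ∈ F, wordSum F m fun l => altProd T b (j :: l)‖₊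
      ≤ ∑ j ∈ F, wordSum F m fun l => C * chainWeight w (j :: l) :=
        (nnnorm_sum_le _ _).trans <| Finset.sum_le_sum fun j _ =>
          (nnnorm_wordSum_le F m _).trans <|
            wordSum_mono F m fun l => hT.nnnorm_altProd_cons_le hdiag b j l
    _ ≤ ∑ _j ∈ F, C * C ^ m := Finset.sum_le_sum fun j _ => by
        rw [← mul_wordSum]; gcongr; exact wordSum_chainWeight_le w C hrow m j
    _ = F.card * C ^ (m + 1) := by rw [Finset.sum_const, nsmul_eq_mul, pow_succ']

theorem nnnorm_sum_le (hT : AlmostOrthogonal T w) (hdiag : ∀ j, w j j ≤ C)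
    {F : Finset ι} (hrow : ∀ j, ∑ k ∈ F, w j k ≤ C) : ‖∑ j ∈ F, T j‖₊ ≤ C := by
  refine CStarRing.nnnorm_le_of_nnnorm_star_mul_self_pow_le (K := F.card) fun n hn => ?_
  obtain ⟨m, rfl⟩ := Nat.exists_eq_succ_of_ne_zero hn.ne'
  rw [star_sum_mul_sum_pow_eq_wordSum, Nat.mul_succ]
  exact hT.nnnorm_wordSum_altProd_le hdiag hrow true (2 * m + 1)

end AlmostOrthogonal

end CStarRing

end CotlarStein

open CotlarStein in
/-- Cotlar–Knapp–Stein almost orthogonality lemma (uniform bound version):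
if `‖T j * (T k)^*‖ + ‖(T j)^* * T k‖ ≤ γ (j - k)` and `∑ √(γ j) < ∞`, then the
partial sums `∑_{|j| ≤ N} T j` are uniformly bounded by `∑' j, √(γ j)`. -/
theorem cotlar_stein_uniform_bound
    {H : Type*} [NormedAddCommGroup H] [InnerProductSpace ℂ H] [CompleteSpace H]
    (T : ℤ → H →L[ℂ] H) (γ : ℤ → ℝ≥0)
    (hsum : Summable fun j : ℤ => Real.sqrt (γ j))
    (hT : ∀ j k : ℤ,
      ‖(T j) ∘L (ContinuousLinearMap.adjoint (T k))‖
        + ‖(ContinuousLinearMap.adjoint (T j)) ∘L (T k)‖ ≤ (γ (j - k) : ℝ)) :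
    ∀ N : ℕ, ‖∑ j ∈ Finset.Icc (-(N : ℤ)) (N : ℤ), T j‖ ≤ ∑' j : ℤ, Real.sqrt (γ j) := by
  intro N
  have hsum' : Summable fun j => NNReal.sqrt (γ j) :=
    NNReal.summable_coe.mp (by simpa only [Real.coe_sqrt] using hsum)
  have hT' : AlmostOrthogonal T fun j k => NNReal.sqrt (γ (j - k)) := by
    refine ⟨fun j k => ?_, fun j k => ?_⟩ <;>
      rw [NNReal.sq_sqrt, ← NNReal.coe_le_coe, coe_nnnorm, ContinuousLinearMap.star_eq_adjoint,
        ContinuousLinearMap.mul_def]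
    · exact (le_add_of_nonneg_left (norm_nonneg _)).trans (hT j k)
    · exact (le_add_of_nonneg_right (norm_nonneg _)).trans (hT j k)
  have hrow : ∀ j, ∑ k ∈ Finset.Icc (-(N : ℤ)) N, NNReal.sqrt (γ (j - k))
      ≤ ∑' i, NNReal.sqrt (γ i) := fun j =>
    calc _ ≤ ∑' k, NNReal.sqrt (γ (j - k)) :=
          ((Equiv.subLeft j).summable_iff.mpr hsum').sum_le_tsum _ fun _ _ => zero_le
      _ = ∑' i, NNReal.sqrt (γ i) := (Equiv.subLeft j).tsum_eq fun i => NNReal.sqrt (γ i)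
  have hdiag : ∀ j : ℤ, NNReal.sqrt (γ (j - j)) ≤ ∑' i, NNReal.sqrt (γ i) := fun j => by
    rw [sub_self]; exact hsum'.le_tsum 0 fun _ _ => zero_le
  simpa only [← NNReal.coe_le_coe, coe_nnnorm, NNReal.coe_tsum, Real.coe_sqrt] using
    hT'.nnnorm_sum_le hdiag hrow
end

section
/- Let a be a smooth function on [0,1] with all derivatives bounded, and let d̃ ≥ 0. For t ≥ 1 with t^{1/2} < 1 + d̃, the oscillatory integral I_+ = ∫_1^∞ e^{i(λ² + d̃ t^{−1/2} λ)} λ a(t^{−1/2}λ) dλ satisfies |I_+| ≤ C t^{1/2}(1 + d̃), with C independent of t and d̃. -/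
open MeasureTheory Complex

/-- The `I_{∞,+}` estimate: for `a ∈ C_c^∞([0,1])`, `t ≥ 1`, `d̃ ≥ 0` with
`√t < 1 + d̃`, `|∫_1^∞ e^{i(λ² + d̃ t^{-1/2} λ)} λ a(t^{-1/2}λ) dλ| ≤ C √t (1 + d̃)`,
with `C` independent of `t` and `d̃`. -/
theorem I_infty_plus_estimate
    (a : ℝ → ℂ) (ha : ContDiff ℝ (⊤ : ℕ∞) a) (hsupp : tsupport a ⊆ Set.Icc (0 : ℝ) 1) :
    ∃ C : ℝ, 0 < C ∧ ∀ t d : ℝ, 1 ≤ t → 0 ≤ d → Real.sqrt t < 1 + d →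
      ‖∫ lam in Set.Ioi (1 : ℝ),
          Complex.exp (Complex.I * ((lam : ℂ) ^ 2
              + (d : ℂ) * ((t ^ (-(1 : ℝ) / 2) : ℝ) : ℂ) * (lam : ℂ)))
            * (lam : ℂ) * a (t ^ (-(1 : ℝ) / 2) * lam)‖
        ≤ C * Real.sqrt t * (1 + d) := by
  have hcs : HasCompactSupport a :=
    IsCompact.of_isClosed_subset isCompact_Icc (isClosed_tsupport a) hsupp
  obtain ⟨M, hM⟩ := hcs.exists_bound_of_continuous ha.continuous
  have hM0 : 0 ≤ M := le_trans (norm_nonneg _) (hM 0)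
  refine ⟨M + 1, by positivity, fun t d ht hd htd => ?_⟩
  have ht0 : (0 : ℝ) < t := lt_of_lt_of_le one_pos ht
  have hst1 : 1 ≤ Real.sqrt t := Real.one_le_sqrt.2 ht
  have hst0 : 0 < Real.sqrt t := lt_of_lt_of_le one_pos hst1
  set f : ℝ → ℂ := fun lam =>
      Complex.exp (Complex.I * ((lam : ℂ) ^ 2
          + (d : ℂ) * ((t ^ (-(1 : ℝ) / 2) : ℝ) : ℂ) * (lam : ℂ)))
        * (lam : ℂ) * a (t ^ (-(1 : ℝ) / 2) * lam) with hf
  have hrpow : t ^ (-(1 : ℝ) / 2) = (Real.sqrt t)⁻¹ := by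
    rw [Real.sqrt_eq_rpow, ← Real.rpow_neg ht0.le]
    norm_num
  -- the integrand vanishes for lam > √t
  have hzero : ∀ lam ∈ Set.Ioi (1 : ℝ) \ Set.Ioc (1 : ℝ) (Real.sqrt t), f lam = 0 := by
    intro lam hlam
    have hgt : Real.sqrt t < lam := by
      rcases hlam with ⟨h1, h2⟩
      simp only [Set.mem_Ioc, not_and, not_le] at h2
      exact h2 h1
    have ha0 : a (t ^ (-(1 : ℝ) / 2) * lam) = 0 := by
      by_contra h
      have := hsupp (subset_tsupport a h)
      have hx : 1 < t ^ (-(1 : ℝ) / 2) * lam := by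
        rw [hrpow]
        rw [inv_mul_eq_div, lt_div_iff₀ hst0, one_mul]
        exact hgt
      exact absurd this.2 (not_le.2 hx)
    simp [hf, ha0]
  rw [setIntegral_eq_of_subset_of_forall_diff_eq_zero measurableSet_Ioi
      Set.Ioc_subset_Ioi_self hzero]
  have hbound : ∀ lam ∈ Set.Ioc (1 : ℝ) (Real.sqrt t), ‖f lam‖ ≤ Real.sqrt t * M := by
    intro lam hlam
    have h1 : (1 : ℝ) < lam := hlam.1
    have h2 : lam ≤ Real.sqrt t := hlam.2
    have hl0 : 0 ≤ lam := le_of_lt (lt_trans one_pos h1)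
    rw [hf]
    simp only [norm_mul]
    have hexp : ‖Complex.exp (Complex.I * ((lam : ℂ) ^ 2
        + (d : ℂ) * ((t ^ (-(1 : ℝ) / 2) : ℝ) : ℂ) * (lam : ℂ)))‖ = 1 := by
      rw [Complex.norm_exp]
      have : (Complex.I * ((lam : ℂ) ^ 2
          + (d : ℂ) * ((t ^ (-(1 : ℝ) / 2) : ℝ) : ℂ) * (lam : ℂ))).re = 0 := by
        simp [Complex.mul_re, ← Complex.ofReal_pow]
      rw [this, Real.exp_zero]
    rw [hexp, one_mul]
    apply mul_le_mul _ (hM _) (norm_nonneg _) hst0.le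
    rw [Complex.norm_real, Real.norm_eq_abs, _root_.abs_of_nonneg hl0]
    exact h2
  have hmeas : volume (Set.Ioc (1 : ℝ) (Real.sqrt t)) < ⊤ := by
    rw [Real.volume_Ioc]
    exact ENNReal.ofReal_lt_top
  have hcont : Continuous f := by
    have hac : Continuous a := ha.continuous
    rw [hf]; fun_prop
  have := norm_setIntegral_le_of_norm_le_const hmeas hbound
  refine this.trans ?_
  rw [measureReal_def, Real.volume_Ioc, ENNReal.toReal_ofReal (by linarith)]
  have h1 : Real.sqrt t - 1 ≤ 1 + d := by linarith
  have h2 : Real.sqrt t * M * (Real.sqrt t - 1) ≤ Real.sqrt t * M * (1 + d) :=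
    mul_le_mul_of_nonneg_left h1 (by positivity)
  refine h2.trans ?_
  have : Real.sqrt t * M ≤ (M + 1) * Real.sqrt t := by nlinarith
  nlinarith
end

section
/- Let a ∈ C_c^∞([0,1]) with bounded derivatives, d̃ ≥ 0, t ≥ 1 with t^{1/2} < 1 + d̃. Then |∫_1^∞ e^{i(λ² − d̃ t^{−1/2}λ)} λ a(t^{−1/2}λ) dλ| ≤ C t^{1/2}(1 + d̃), with C independent of t, d̃. -/
open MeasureTheory Complex

/-- The `I_{∞,-}` estimate (possibly stationary phase): for `a ∈ C_c^∞([0,1])`, `t ≥ 1`,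
`d̃ ≥ 0` with `√t < 1 + d̃`,
`|∫_1^∞ e^{i(λ² - d̃ t^{-1/2} λ)} λ a(t^{-1/2}λ) dλ| ≤ C √t (1 + d̃)`. -/
theorem I_infty_minus_estimate
    (a : ℝ → ℂ) (ha : ContDiff ℝ (⊤ : ℕ∞) a) (hsupp : tsupport a ⊆ Set.Icc (0 : ℝ) 1) :
    ∃ C : ℝ, 0 < C ∧ ∀ t d : ℝ, 1 ≤ t → 0 ≤ d → Real.sqrt t < 1 + d →
      ‖∫ lam in Set.Ioi (1 : ℝ),
          Complex.exp (Complex.I * ((lam : ℂ) ^ 2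
              - (d : ℂ) * ((t ^ (-(1 : ℝ) / 2) : ℝ) : ℂ) * (lam : ℂ)))
            * (lam : ℂ) * a (t ^ (-(1 : ℝ) / 2) * lam)‖
        ≤ C * Real.sqrt t * (1 + d) := by
  have hcs : HasCompactSupport a :=
    IsCompact.of_isClosed_subset isCompact_Icc (isClosed_tsupport a) hsupp
  obtain ⟨M, hM⟩ := hcs.exists_bound_of_continuous ha.continuous
  have hM0 : 0 ≤ M := le_trans (norm_nonneg (a 0)) (hM 0)
  refine ⟨M + 1, by linarith, ?_⟩
  intro t d ht hd htd
  set s := Real.sqrt t with hs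
  have ht0 : (0:ℝ) < t := lt_of_lt_of_le one_pos ht
  have hs1 : 1 ≤ s := Real.one_le_sqrt.mpr ht
  have hss : s * s = t := Real.mul_self_sqrt ht0.le
  have hs0 : 0 < s := lt_of_lt_of_le one_pos hs1
  have hrp : t ^ (-(1:ℝ)/2) = s⁻¹ := by
    have h2 : -(1:ℝ)/2 = -(1/2) := by norm_num
    rw [hs, h2, Real.rpow_neg ht0.le, Real.sqrt_eq_rpow]
  set c : ℝ := t ^ (-(1:ℝ)/2) with hc
  have hc0 : 0 < c := by rw [hrp]; positivity
  set f : ℝ → ℂ := fun lam =>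
    Complex.exp (Complex.I * ((lam : ℂ) ^ 2 - (d : ℂ) * (c : ℂ) * (lam : ℂ)))
      * (lam : ℂ) * a (c * lam) with hf
  have hnorm : ∀ lam : ℝ, ‖f lam‖ = |lam| * ‖a (c * lam)‖ := by
    intro lam
    have : (Complex.I * ((lam : ℂ) ^ 2 - (d : ℂ) * (c : ℂ) * (lam : ℂ)))
        = ((lam ^ 2 - d * c * lam : ℝ) : ℂ) * Complex.I := by push_cast; ring
    rw [hf]
    simp only [norm_mul, this, Complex.norm_exp_ofReal_mul_I, one_mul,
      Complex.norm_real, Real.norm_eq_abs]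
  have hzero : ∀ lam : ℝ, s < lam → f lam = 0 := by
    intro lam hlam
    have h1 : 1 < c * lam := by
      rw [hrp, inv_mul_eq_div]
      exact (one_lt_div hs0).mpr hlam
    have : a (c * lam) = 0 := by
      apply image_eq_zero_of_notMem_tsupport
      intro hmem
      exact absurd ((hsupp hmem).2) (not_le.mpr h1)
    simp [hf, this]
  -- continuity and compact support of f
  have hfc : Continuous f := by
    apply Continuous.mul
    apply Continuous.mul
    · exact Complex.continuous_exp.comp (by continuity)
    · exact Complex.continuous_ofReal
    · exact ha.continuous.comp (continuous_const.mul continuous_id)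
  have hfcs : HasCompactSupport f := by
    have : HasCompactSupport (fun lam : ℝ => a (c * lam)) := by
      simpa [smul_eq_mul] using hcs.comp_smul (c := c) hc0.ne'
    exact HasCompactSupport.mul_left this
  have hint : Integrable f := hfc.integrable_of_hasCompactSupport hfcs
  have hsplit : (∫ lam in Set.Ioi (1:ℝ), f lam) = ∫ lam in Set.Ioc 1 s, f lam := by
    rw [← Set.Ioc_union_Ioi_eq_Ioi hs1,
      setIntegral_union (Set.Ioc_disjoint_Ioi le_rfl) measurableSet_Ioi
        hint.integrableOn hint.integrableOn]
    have h0 : (∫ x in Set.Ioi s, f x) = 0 :=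
      setIntegral_eq_zero_of_forall_eq_zero fun x hx => hzero x hx
    rw [h0, add_zero]
  have hbound : ‖∫ lam in Set.Ioc 1 s, f lam‖ ≤ M * s * ((volume (Set.Ioc (1:ℝ) s)).toReal) := by
    apply norm_setIntegral_le_of_norm_le_const
    · rw [Real.volume_Ioc]; exact ENNReal.ofReal_lt_top
    · intro x hx
      rw [hnorm]
      have hx1 : 0 < x := lt_trans one_pos hx.1
      have : |x| ≤ s := by rw [abs_of_pos hx1]; exact hx.2
      calc |x| * ‖a (c * x)‖ ≤ s * M :=
            mul_le_mul this (hM _) (norm_nonneg _) hs0.le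
        _ = M * s := mul_comm _ _
  have hvol : (volume (Set.Ioc (1:ℝ) s)).toReal = s - 1 := by
    rw [Real.volume_Ioc, ENNReal.toReal_ofReal (by linarith)]
  show ‖∫ lam in Set.Ioi (1:ℝ), f lam‖ ≤ (M + 1) * s * (1 + d)
  rw [hsplit]
  calc ‖∫ lam in Set.Ioc 1 s, f lam‖ ≤ M * s * (s - 1) := by rw [← hvol]; exact hbound
    _ ≤ M * s * (1 + d) :=
      mul_le_mul_of_nonneg_left (by linarith) (mul_nonneg hM0 hs0.le)
    _ ≤ (M + 1) * s * (1 + d) := by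
      have h1 : M * s ≤ (M + 1) * s := mul_le_mul_of_nonneg_right (by linarith) hs0.le
      exact mul_le_mul_of_nonneg_right h1 (by linarith)
end

section
/- Let n ≥ 1, D ≥ 0, 0 < t ≤ 1, and suppose a : [1,∞) → ℂ satisfies |a^{(j)}(λ)| ≤ C_j t^{n/4} λ^{−n/2−j}. Then |∫_1^∞ e^{i(λ² + Dt^{−1/2}λ)} λ^n a(λ) dλ| ≤ C (1 + D)^{n/2}. -/
open MeasureTheory Complex Set Filter
open scoped ContDiff
noncomputable section

def TPchi (x : ℝ) : ℝ := 1 - Real.smoothTransition (x - 1)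

lemma TPchi_contDiff : ContDiff ℝ ∞ TPchi :=
  contDiff_const.sub (Real.smoothTransition.contDiff.comp (contDiff_id.sub contDiff_const))

lemma TPchi_one {x : ℝ} (h : x ≤ 1) : TPchi x = 1 := by
  simp [TPchi, Real.smoothTransition.zero_of_nonpos (by linarith : x - 1 ≤ 0)]

lemma TPchi_zero {x : ℝ} (h : 2 ≤ x) : TPchi x = 0 := by
  simp [TPchi, Real.smoothTransition.one_of_one_le (by linarith : 1 ≤ x - 1)]

lemma TPchi_mem (x : ℝ) : ‖TPchi x‖ ≤ 1 := by
  rw [Real.norm_eq_abs, abs_le, TPchi]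
  constructor <;> [linarith [Real.smoothTransition.le_one (x-1)];
    linarith [Real.smoothTransition.nonneg (x-1)]]

lemma iteratedDeriv_congr_nhds {F : Type*} [NormedAddCommGroup F] [NormedSpace ℝ F]
    {f g : ℝ → F} {x : ℝ} (h : f =ᶠ[nhds x] g) (m : ℕ) :
    iteratedDeriv m f x = iteratedDeriv m g x := by
  rw [iteratedDeriv_eq_iteratedFDeriv, iteratedDeriv_eq_iteratedFDeriv]
  have : iteratedFDeriv ℝ m f x = iteratedFDeriv ℝ m g x := by
    rw [← iteratedFDerivWithin_univ, ← iteratedFDerivWithin_univ]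
    exact Filter.EventuallyEq.iteratedFDerivWithin_eq (by rwa [nhdsWithin_univ]) h.eq_of_nhds m
  rw [this]

lemma iteratedDeriv_const' {F : Type*} [NormedAddCommGroup F] [NormedSpace ℝ F]
    (c : F) (m : ℕ) (x : ℝ) : iteratedDeriv m (fun _ => c) x = (if m = 0 then c else 0) := by
  rcases Nat.eq_zero_or_pos m with rfl | hm
  · simp
  · rw [if_neg hm.ne', iteratedDeriv_eq_iteratedFDeriv, iteratedFDeriv_const_of_ne hm.ne']
    simp

lemma TPchi_deriv_zero {m : ℕ} (hm : m ≠ 0) {y : ℝ} (hy : y < 1 ∨ 2 < y) :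
    iteratedDeriv m TPchi y = 0 := by
  rcases hy with hy | hy
  · have : TPchi =ᶠ[nhds y] (fun _ => (1:ℝ)) := by
      filter_upwards [Iio_mem_nhds hy] with z hz using TPchi_one hz.le
    rw [iteratedDeriv_congr_nhds this, iteratedDeriv_const', if_neg hm]
  · have : TPchi =ᶠ[nhds y] (fun _ => (0:ℝ)) := by
      filter_upwards [Ioi_mem_nhds hy] with z hz using TPchi_zero hz.le
    rw [iteratedDeriv_congr_nhds this, iteratedDeriv_const', if_neg hm]

lemma TPchi_global_bound (m : ℕ) : ∃ X : ℝ, 1 ≤ X ∧ ∀ y, ‖iteratedDeriv m TPchi y‖ ≤ X := by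
  rcases Nat.eq_zero_or_pos m with rfl | hm
  · exact ⟨1, le_rfl, by simpa using TPchi_mem⟩
  · have hc : Continuous (fun y => ‖iteratedDeriv m TPchi y‖) :=
      (TPchi_contDiff.continuous_iteratedDeriv m (by exact_mod_cast le_top)).norm
    obtain ⟨z, _, hz⟩ := isCompact_Icc.exists_isMaxOn (by norm_num : (Icc (1:ℝ) 2).Nonempty)
      hc.continuousOn
    refine ⟨max ‖iteratedDeriv m TPchi z‖ 1, le_max_right _ _, fun y => ?_⟩
    rcases le_or_gt y 2 with h2 | h2
    · rcases le_or_gt 1 y with h1 | h1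
      · exact le_max_of_le_left (hz ⟨h1, h2⟩)
      · simp [TPchi_deriv_zero hm.ne' (Or.inl h1)]
    · simp [TPchi_deriv_zero hm.ne' (Or.inr h2)]

lemma iteratedDeriv_congr_nhds' {F : Type*} [NormedAddCommGroup F] [NormedSpace ℝ F]
    {f g : ℝ → F} {x : ℝ} (h : f =ᶠ[nhds x] g) (m : ℕ) :
    iteratedDeriv m f x = iteratedDeriv m g x := by
  rw [iteratedDeriv_eq_iteratedFDeriv, iteratedDeriv_eq_iteratedFDeriv]
  have : iteratedFDeriv ℝ m f x = iteratedFDeriv ℝ m g x := by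
    rw [← iteratedFDerivWithin_univ, ← iteratedFDerivWithin_univ]
    exact Filter.EventuallyEq.iteratedFDerivWithin_eq (by rwa [nhdsWithin_univ]) h.eq_of_nhds m
  rw [this]

def TPpsi (B : ℝ) (x : ℝ) : ℂ := -I * (((2*x + B : ℝ) : ℂ))⁻¹
def TPq (B : ℝ) (g : ℝ → ℂ) (x : ℝ) : ℂ := TPpsi B x * g x
def TPL (B : ℝ) (g : ℝ → ℂ) (x : ℝ) : ℂ := -deriv (TPq B g) x

lemma TPdenom_pos {B x : ℝ} (hB : 0 ≤ B) (hx : 0 < x) : 0 < 2*x + B := by linarith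

lemma TPdenom_ne {B x : ℝ} (hB : 0 ≤ B) (hx : 0 < x) : ((2*x + B : ℝ) : ℂ) ≠ 0 := by
  exact_mod_cast (TPdenom_pos hB hx).ne'

lemma TPpsi_contDiffOn {B : ℝ} (hB : 0 ≤ B) : ContDiffOn ℝ ∞ (TPpsi B) (Ioi 0) := by
  apply ContDiffOn.mul contDiffOn_const
  apply ContDiffOn.inv
  · exact (Complex.ofRealCLM.contDiff.comp
      ((contDiff_const.mul contDiff_id).add contDiff_const)).contDiffOn
  · exact fun x hx => TPdenom_ne hB hx

lemma TPpsi_iteratedDeriv {B : ℝ} (hB : 0 ≤ B) (m : ℕ) :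
    ∀ x ∈ Ioi (0:ℝ), iteratedDeriv m (TPpsi B) x
      = (-I) * (-2)^m * (m.factorial : ℂ) * (((2*x + B : ℝ) : ℂ)) ^ (-(m+1) : ℤ) := by
  induction m with
  | zero =>
    intro x hx
    simp [TPpsi]
  | succ m ih =>
    intro x hx
    have hev : iteratedDeriv m (TPpsi B) =ᶠ[nhds x]
        (fun y => (-I) * (-2)^m * (m.factorial : ℂ) * (((2*y + B : ℝ) : ℂ)) ^ (-(m+1) : ℤ)) := by
      filter_upwards [Ioi_mem_nhds hx] with y hy using ih y hy
    rw [iteratedDeriv_succ, hev.deriv_eq]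
    have hw : HasDerivAt (fun y : ℝ => ((2*y + B : ℝ) : ℂ)) (2 : ℂ) x := by
      have : HasDerivAt (fun y : ℝ => 2*y + B) 2 x := by
        simpa using ((hasDerivAt_id x).const_mul 2).add_const B
      exact_mod_cast this.ofReal_comp
    have hz := TPdenom_ne hB hx
    have hpow := (hasDerivAt_zpow (-(m+1) : ℤ) _ (Or.inl hz)).comp x hw
    have := (hpow.const_mul ((-I) * (-2)^m * (m.factorial : ℂ))).deriv
    rw [Function.comp_def] at this
    rw [this]
    have he : (-(↑m+1) - 1 : ℤ) = -((m:ℤ)+1+1) := by ring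
    rw [he]
    push_cast [Nat.factorial_succ, Nat.add_comm 1 m]
    ring

lemma TPpsi_norm_bound {B : ℝ} (hB : 0 ≤ B) (m : ℕ) {x : ℝ} (hx : 1 ≤ x) :
    ‖iteratedDeriv m (TPpsi B) x‖ ≤ m.factorial * x ^ (-1 - m : ℝ) := by
  have hx0 : (0:ℝ) < x := lt_of_lt_of_le one_pos hx
  have hc : (0:ℝ) < 2*x + B := TPdenom_pos hB hx0
  have h2x : (0:ℝ) < 2*x := by linarith
  rw [TPpsi_iteratedDeriv hB m x hx0]
  have hnorm : ‖(-I) * (-2 : ℂ)^m * (m.factorial : ℂ) * (((2*x + B : ℝ) : ℂ)) ^ (-(m+1) : ℤ)‖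
      = 2^m * m.factorial * (2*x + B) ^ (-(1 + m) : ℝ) := by
    rw [norm_mul, norm_mul, norm_mul, norm_zpow, norm_pow]
    rw [← Real.rpow_intCast ‖((2*x + B : ℝ) : ℂ)‖ (-(m+1) : ℤ)]
    rw [show ((-(m+1) : ℤ) : ℝ) = (-(1 + m) : ℝ) by push_cast; ring]
    rw [Complex.norm_real, Real.norm_eq_abs, abs_of_pos hc]
    simp
  rw [hnorm]
  have step1 : (2*x + B) ^ (-(1 + m) : ℝ) ≤ (2*x) ^ (-(1 + m) : ℝ) :=
    Real.rpow_le_rpow_of_nonpos h2x (by linarith) (neg_nonpos.mpr (by positivity))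
  have step2 : (2*x : ℝ) ^ (-(1 + m) : ℝ) = 2 ^ (-(1 + m) : ℝ) * x ^ (-(1 + m) : ℝ) :=
    Real.mul_rpow (by norm_num) hx0.le
  have step3 : (2:ℝ)^m * 2 ^ (-(1 + m) : ℝ) ≤ 1 := by
    rw [← Real.rpow_natCast 2 m, ← Real.rpow_add (by norm_num)]
    calc (2:ℝ) ^ ((m : ℝ) + -(1 + m)) = 2 ^ (-1 : ℝ) := by congr 1; ring
    _ ≤ 1 := by
        rw [Real.rpow_neg_one]
        norm_num
  calc 2^m * (m.factorial : ℝ) * (2*x + B) ^ (-(1 + m) : ℝ)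
      ≤ 2^m * (m.factorial : ℝ) * (2 ^ (-(1 + m) : ℝ) * x ^ (-(1 + m) : ℝ)) := by
        rw [← step2]
        exact mul_le_mul_of_nonneg_left step1 (by positivity)
    _ = (2^m * 2 ^ (-(1 + m) : ℝ)) * ((m.factorial : ℝ) * x ^ (-(1 + m) : ℝ)) := by ring
    _ ≤ 1 * ((m.factorial : ℝ) * x ^ (-(1 + m) : ℝ)) := by
        apply mul_le_mul_of_nonneg_right step3 (by positivity)
    _ = (m.factorial : ℝ) * x ^ (-1 - m : ℝ) := by rw [one_mul]; ring_nf

def TPK (j : ℕ) : ℕ := ∑ i ∈ Finset.range (j+1), j.choose i * i.factorial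

lemma TPK_mono : Monotone TPK := by
  intro a b hab
  calc TPK a = ∑ i ∈ Finset.range (a+1), a.choose i * i.factorial := rfl
    _ ≤ ∑ i ∈ Finset.range (a+1), b.choose i * i.factorial :=
        Finset.sum_le_sum (fun i _ => Nat.mul_le_mul_right _ (Nat.choose_le_choose i hab))
    _ ≤ ∑ i ∈ Finset.range (b+1), b.choose i * i.factorial :=
        Finset.sum_le_sum_of_subset (Finset.range_subset_range.mpr (by omega))
    _ = TPK b := rfl

lemma TPK_one_le (j : ℕ) : 1 ≤ TPK j := by
  have : 1 ≤ j.choose 0 * Nat.factorial 0 := by simp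
  exact le_trans this (Finset.single_le_sum (f := fun i => j.choose i * i.factorial)
    (fun i _ => Nat.zero_le _) (Finset.mem_range.mpr (by omega)))

lemma norm_iteratedDeriv_eq_within {f : ℝ → ℂ} {x : ℝ} (hx : x ∈ Ioi (0:ℝ)) (k : ℕ) :
    ‖iteratedFDerivWithin ℝ k f (Ioi 0) x‖ = ‖iteratedDeriv k f x‖ := by
  rw [iteratedFDerivWithin_of_isOpen k isOpen_Ioi hx, norm_iteratedFDeriv_eq_norm_iteratedDeriv]

lemma TPq_contDiffOn {B : ℝ} (hB : 0 ≤ B) {g : ℝ → ℂ} (hg : ContDiffOn ℝ ∞ g (Ioi 0)) :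
    ContDiffOn ℝ ∞ (TPq B g) (Ioi 0) := (TPpsi_contDiffOn hB).mul hg

lemma TPq_bound {B : ℝ} (hB : 0 ≤ B) {g : ℝ → ℂ} {M p : ℝ} {J : ℕ}
    (hg : ContDiffOn ℝ ∞ g (Ioi 0)) (hM : 0 ≤ M)
    (hbd : ∀ j ≤ J, ∀ x : ℝ, 1 ≤ x → ‖iteratedDeriv j g x‖ ≤ M * x ^ (p - j))
    {j : ℕ} (hj : j ≤ J) {x : ℝ} (hx : 1 ≤ x) :
    ‖iteratedDeriv j (TPq B g) x‖ ≤ (TPK j : ℝ) * M * x ^ (p - 1 - j) := by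
  have hx0 : (0:ℝ) < x := lt_of_lt_of_le one_pos hx
  have hmem : x ∈ Ioi (0:ℝ) := hx0
  rw [← norm_iteratedDeriv_eq_within hmem j]
  have hmul := norm_iteratedFDerivWithin_mul_le (𝕜 := ℝ) (A := ℂ)
    (TPpsi_contDiffOn hB) hg isOpen_Ioi.uniqueDiffOn hmem (mod_cast le_top : (j : WithTop ℕ∞) ≤ ∞)
  have heq : TPq B g = fun y => TPpsi B y * g y := rfl
  rw [heq]
  refine le_trans hmul ?_
  have hterm : ∀ i ∈ Finset.range (j+1),
      (j.choose i : ℝ) * ‖iteratedFDerivWithin ℝ i (TPpsi B) (Ioi 0) x‖ *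
        ‖iteratedFDerivWithin ℝ (j-i) g (Ioi 0) x‖
      ≤ ((j.choose i * i.factorial : ℕ) : ℝ) * M * x ^ (p - 1 - j) := by
    intro i hi
    have hij : i ≤ j := by simpa using Nat.lt_succ_iff.mp (Finset.mem_range.mp hi)
    rw [norm_iteratedDeriv_eq_within hmem, norm_iteratedDeriv_eq_within hmem]
    have h1 : ‖iteratedDeriv i (TPpsi B) x‖ ≤ i.factorial * x ^ (-1 - i : ℝ) :=
      TPpsi_norm_bound hB i hx
    have h2 : ‖iteratedDeriv (j-i) g x‖ ≤ M * x ^ (p - (j-i : ℕ)) :=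
      hbd (j-i) (le_trans (Nat.sub_le j i) hj) x hx
    calc (j.choose i : ℝ) * ‖iteratedDeriv i (TPpsi B) x‖ * ‖iteratedDeriv (j-i) g x‖
        ≤ (j.choose i : ℝ) * (i.factorial * x ^ (-1 - i : ℝ)) * (M * x ^ (p - (j-i : ℕ))) := by
          apply mul_le_mul (mul_le_mul_of_nonneg_left h1 (by positivity)) h2 (norm_nonneg _)
          positivity
      _ = ((j.choose i * i.factorial : ℕ) : ℝ) * M * (x ^ (-1 - i : ℝ) * x ^ (p - (j-i : ℕ))) := by
          push_cast; ring
      _ = ((j.choose i * i.factorial : ℕ) : ℝ) * M * x ^ (p - 1 - j) := by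
          rw [← Real.rpow_add hx0]
          congr 1
          have : ((j - i : ℕ) : ℝ) = (j : ℝ) - i := by
            rw [Nat.cast_sub hij]
          rw [this]; ring
  refine le_trans (Finset.sum_le_sum hterm) ?_
  rw [← Finset.sum_mul, ← Finset.sum_mul, ← Nat.cast_sum]
  rfl

lemma TPL_contDiffOn {B : ℝ} (hB : 0 ≤ B) {g : ℝ → ℂ} (hg : ContDiffOn ℝ ∞ g (Ioi 0)) :
    ContDiffOn ℝ ∞ (TPL B g) (Ioi 0) := by
  have : ContDiffOn ℝ ∞ (deriv (TPq B g)) (Ioi 0) :=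
    (TPq_contDiffOn hB hg).deriv_of_isOpen isOpen_Ioi (le_refl _)
  exact this.neg

lemma TPL_vanish {B S : ℝ} {g : ℝ → ℂ} (hvan : ∀ x, S < x → g x = 0) :
    ∀ x, S < x → TPL B g x = 0 := by
  intro x hx
  have hev : TPq B g =ᶠ[nhds x] (fun _ => (0:ℂ)) := by
    filter_upwards [Ioi_mem_nhds hx] with y hy
    simp [TPq, hvan y hy]
  have : deriv (TPq B g) x = deriv (fun _ => (0:ℂ)) x := hev.deriv_eq
  simp [TPL, this]

lemma TPL_bound {B : ℝ} (hB : 0 ≤ B) {g : ℝ → ℂ} {M p : ℝ} {J : ℕ}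
    (hg : ContDiffOn ℝ ∞ g (Ioi 0)) (hM : 0 ≤ M)
    (hbd : ∀ j ≤ J + 1, ∀ x : ℝ, 1 ≤ x → ‖iteratedDeriv j g x‖ ≤ M * x ^ (p - j)) :
    ∀ j ≤ J, ∀ x : ℝ, 1 ≤ x →
      ‖iteratedDeriv j (TPL B g) x‖ ≤ (TPK (J+1) : ℝ) * M * x ^ (p - 2 - j) := by
  intro j hj x hx
  have h1 : iteratedDeriv j (TPL B g) x = -(iteratedDeriv j (deriv (TPq B g)) x) := by
    have : TPL B g = fun y => -(deriv (TPq B g) y) := rfl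
    rw [this, iteratedDeriv_fun_neg]
  have h2 : iteratedDeriv j (deriv (TPq B g)) x = iteratedDeriv (j+1) (TPq B g) x := by
    rw [iteratedDeriv_succ']
  rw [h1, norm_neg, h2]
  have := TPq_bound hB hg hM hbd (j := j+1) (by omega) hx
  refine le_trans this ?_
  have he : p - 1 - ((j+1 : ℕ) : ℝ) = p - 2 - j := by push_cast; ring
  rw [he]
  have : ((TPK (j+1) : ℕ) : ℝ) ≤ ((TPK (J+1) : ℕ) : ℝ) := by
    exact_mod_cast TPK_mono (by omega : j+1 ≤ J+1)
  apply mul_le_mul_of_nonneg_right (mul_le_mul_of_nonneg_right this hM) (by positivity)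

lemma TPL_iter {B : ℝ} (hB : 0 ≤ B) (N : ℕ) {g : ℝ → ℂ} {M p S : ℝ}
    (hg : ContDiffOn ℝ ∞ g (Ioi 0)) (hM : 0 ≤ M) (hvan : ∀ x, S < x → g x = 0)
    (hbd : ∀ j ≤ N, ∀ x : ℝ, 1 ≤ x → ‖iteratedDeriv j g x‖ ≤ M * x ^ (p - j)) :
    ∀ k, k ≤ N → ContDiffOn ℝ ∞ ((TPL B)^[k] g) (Ioi 0) ∧
      (∀ x, S < x → ((TPL B)^[k] g) x = 0) ∧
      (∀ j, j ≤ N - k → ∀ x : ℝ, 1 ≤ x →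
        ‖iteratedDeriv j ((TPL B)^[k] g) x‖ ≤ (TPK N : ℝ)^k * M * x ^ (p - 2*k - j)) := by
  intro k
  induction k with
  | zero =>
    intro _
    refine ⟨hg, hvan, fun j hj x hx => ?_⟩
    simpa using hbd j (by omega) x hx
  | succ k ih =>
    intro hkN
    obtain ⟨ihs, ihv, ihb⟩ := ih (by omega)
    rw [Function.iterate_succ_apply']
    refine ⟨TPL_contDiffOn hB ihs, TPL_vanish ihv, fun j hj x hx => ?_⟩
    have hbd' : ∀ j' ≤ (N - (k+1)) + 1, ∀ x : ℝ, 1 ≤ x →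
        ‖iteratedDeriv j' ((TPL B)^[k] g) x‖ ≤ ((TPK N : ℝ)^k * M) * x ^ ((p - 2*k) - j') := by
      intro j' hj' x hx
      have := ihb j' (by omega) x hx
      simpa using this
    have := TPL_bound hB ihs (by positivity) hbd' j hj x hx
    refine le_trans this ?_
    have hK : ((TPK (N - (k+1) + 1) : ℕ) : ℝ) ≤ (TPK N : ℝ) :=
      by exact_mod_cast TPK_mono (by omega)
    have hx0 : (0:ℝ) < x := lt_of_lt_of_le one_pos hx
    have hexp : p - 2*(k:ℝ) - 2 - j = p - 2*((k+1 : ℕ) : ℝ) - j := by push_cast; ring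
    rw [hexp] at *
    calc (TPK (N - (k+1) + 1) : ℝ) * ((TPK N : ℝ)^k * M) * x ^ (p - 2*((k+1:ℕ):ℝ) - j)
        ≤ (TPK N : ℝ) * ((TPK N : ℝ)^k * M) * x ^ (p - 2*((k+1:ℕ):ℝ) - j) := by
          apply mul_le_mul_of_nonneg_right (mul_le_mul_of_nonneg_right hK (by positivity))
            (by positivity)
      _ = (TPK N : ℝ)^(k+1) * M * x ^ (p - 2*((k+1:ℕ):ℝ) - j) := by ring

def TPph (B : ℝ) (x : ℝ) : ℂ := Complex.exp (I * ((x:ℂ)^2 + (B:ℂ) * x))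

lemma TPph_hasDerivAt (B : ℝ) (x : ℝ) :
    HasDerivAt (TPph B) (I * (2*(x:ℂ) + B) * TPph B x) x := by
  have h1 : HasDerivAt (fun z : ℂ => z^2 + (B:ℂ)*z) (2*(x:ℂ) + B) (x:ℝ) := by
    have := (hasDerivAt_pow 2 (x:ℂ)).add ((hasDerivAt_id (x:ℂ)).const_mul (B:ℂ))
    simpa [mul_comm, Pi.add_def] using this
  have h2 : HasDerivAt (fun y : ℝ => ((y:ℂ)^2 + (B:ℂ)*y)) (2*(x:ℂ) + B) x := h1.comp_ofReal
  have h3 := (h2.const_mul I).cexp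
  have e : TPph B = fun y : ℝ => Complex.exp (I * ((y:ℂ)^2 + (B:ℂ) * y)) := rfl
  rw [e]
  simpa [mul_comm, mul_left_comm, mul_assoc] using h3

lemma TPph_norm (B : ℝ) (x : ℝ) : ‖TPph B x‖ = 1 := by
  rw [TPph, Complex.norm_exp]
  have : (I * ((x:ℂ)^2 + (B:ℂ) * x)).re = 0 := by
    simp [Complex.mul_re, ← Complex.ofReal_pow]
  rw [this, Real.exp_zero]

lemma TPph_continuous (B : ℝ) : Continuous (TPph B) := by
  apply Complex.continuous_exp.comp
  apply continuous_const.mul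
  exact (Complex.continuous_ofReal.pow 2).add (continuous_const.mul Complex.continuous_ofReal)

lemma TPpsi_cancel {B : ℝ} (hB : 0 ≤ B) {x : ℝ} (hx : 0 < x) :
    I * (2*(x:ℂ) + B) * TPpsi B x = 1 := by
  have hz := TPdenom_ne hB hx
  rw [TPpsi]
  have : ((2*x + B : ℝ) : ℂ) = 2*(x:ℂ) + B := by push_cast; ring
  rw [this] at hz ⊢
  have hI : I * I = -1 := Complex.I_mul_I
  field_simp
  ring_nf
  rw [Complex.I_sq]
  ring

lemma TPinteg {S : ℝ} (hS : 1 ≤ S) {h : ℝ → ℂ} (hc : ContinuousOn h (Ioi 0))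
    (hvan : ∀ x, S < x → h x = 0) : IntegrableOn h (Ioi 1) := by
  have h1 : IntegrableOn h (Ioc 1 S) := by
    have : IntegrableOn h (Icc 1 S) :=
      (hc.mono (fun y hy => lt_of_lt_of_le one_pos hy.1)).integrableOn_Icc
    exact this.mono_set Ioc_subset_Icc_self
  have h2 : IntegrableOn h (Ioi S) := by
    have hz : IntegrableOn (fun _ => (0:ℂ)) (Ioi S) := integrableOn_zero
    exact hz.congr_fun (fun x hx => (hvan x hx).symm) measurableSet_Ioi
  have := h1.union h2
  rwa [Set.Ioc_union_Ioi_eq_Ioi hS] at this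

lemma TPderiv_q_vanish {B S : ℝ} {g : ℝ → ℂ} (hvan : ∀ x, S < x → g x = 0) :
    ∀ x, S < x → deriv (TPq B g) x = 0 := by
  intro x hx
  have := TPL_vanish (B := B) hvan x hx
  rw [TPL] at this
  exact neg_eq_zero.mp this

lemma TPibp {B S : ℝ} (hB : 0 ≤ B) {g : ℝ → ℂ} (hg : ContDiffOn ℝ ∞ g (Ioi 0))
    (hS : 1 ≤ S) (hvan : ∀ x, S < x → g x = 0) :
    ∫ x in Ioi (1:ℝ), TPph B x * g x
      = -(TPph B 1 * (TPpsi B 1 * g 1)) + ∫ x in Ioi (1:ℝ), TPph B x * TPL B g x := by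
  set F : ℝ → ℂ := fun x => TPph B x * TPq B g x with hF_def
  have hdq_cont : ContinuousOn (deriv (TPq B g)) (Ioi 0) :=
    (TPq_contDiffOn hB hg).continuousOn_deriv_of_isOpen isOpen_Ioi (by norm_num)
  have hint1 : IntegrableOn (fun x => TPph B x * g x) (Ioi 1) :=
    TPinteg hS ((TPph_continuous B).continuousOn.mul hg.continuousOn)
      (fun x hx => by simp [hvan x hx])
  have hint2 : IntegrableOn (fun x => TPph B x * deriv (TPq B g) x) (Ioi 1) :=
    TPinteg hS ((TPph_continuous B).continuousOn.mul hdq_cont)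
      (fun x hx => by simp [TPderiv_q_vanish hvan x hx])
  have hderiv : ∀ x ∈ Ici (1:ℝ), HasDerivAt F
      (TPph B x * g x + TPph B x * deriv (TPq B g) x) x := by
    intro x hx
    have hx0 : (0:ℝ) < x := lt_of_lt_of_le one_pos hx
    have hq_diff : HasDerivAt (TPq B g) (deriv (TPq B g) x) x := by
      apply DifferentiableAt.hasDerivAt
      exact (((TPq_contDiffOn hB hg).contDiffAt
        (Ioi_mem_nhds hx0)).differentiableAt (by norm_num))
    have := (TPph_hasDerivAt B x).mul hq_diff
    refine this.congr_deriv ?_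
    rw [TPq]
    symm
    have hcancel := TPpsi_cancel hB hx0
    calc TPph B x * g x + TPph B x * deriv (TPq B g) x
        = (I * (2*(x:ℂ) + B) * TPpsi B x) * (TPph B x * g x)
          + TPph B x * deriv (TPq B g) x := by rw [hcancel]; ring
      _ = I * (2*↑x + ↑B) * TPph B x * (TPpsi B x * g x) + TPph B x * deriv (TPq B g) x := by
          ring
  have htend : Tendsto F atTop (nhds 0) := by
    apply Tendsto.congr' _ tendsto_const_nhds
    filter_upwards [eventually_gt_atTop S] with x hx
    simp [hF_def, TPq, hvan x hx]
  have key := integral_Ioi_of_hasDerivAt_of_tendsto' hderiv (hint1.add hint2) htend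
  rw [integral_add hint1 hint2] at key
  have hF1 : F 1 = TPph B 1 * (TPpsi B 1 * g 1) := rfl
  have h3 : ∫ x in Ioi (1:ℝ), TPph B x * TPL B g x
      = -∫ x in Ioi (1:ℝ), TPph B x * deriv (TPq B g) x := by
    rw [← integral_neg]
    congr 1
    funext x
    rw [TPL]
    ring
  rw [h3]
  have := key
  rw [zero_sub, hF1] at this
  linear_combination this

lemma TPiter_basic {B S : ℝ} (hB : 0 ≤ B) {g : ℝ → ℂ} (hg : ContDiffOn ℝ ∞ g (Ioi 0))
    (hvan : ∀ x, S < x → g x = 0) (k : ℕ) :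
    ContDiffOn ℝ ∞ ((TPL B)^[k] g) (Ioi 0) ∧ (∀ x, S < x → ((TPL B)^[k] g) x = 0) := by
  induction k with
  | zero => exact ⟨hg, hvan⟩
  | succ k ih =>
    rw [Function.iterate_succ_apply']
    exact ⟨TPL_contDiffOn hB ih.1, TPL_vanish ih.2⟩

lemma TPibp_iter {B S : ℝ} (hB : 0 ≤ B) {g : ℝ → ℂ} (hg : ContDiffOn ℝ ∞ g (Ioi 0))
    (hS : 1 ≤ S) (hvan : ∀ x, S < x → g x = 0) (N : ℕ) :
    ∫ x in Ioi (1:ℝ), TPph B x * g x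
      = (∑ k ∈ Finset.range N, -(TPph B 1 * (TPpsi B 1 * ((TPL B)^[k] g) 1)))
        + ∫ x in Ioi (1:ℝ), TPph B x * ((TPL B)^[N] g) x := by
  induction N with
  | zero => simp
  | succ N ih =>
    rw [ih, Finset.sum_range_succ]
    obtain ⟨hsm, hvn⟩ := TPiter_basic hB hg hvan N
    rw [TPibp hB hsm hS hvn, Function.iterate_succ_apply']
    ring

lemma TPpsi_one_norm {B : ℝ} (hB : 0 ≤ B) : ‖TPpsi B 1‖ ≤ 1 := by
  rw [TPpsi, norm_mul, norm_neg, Complex.norm_I, one_mul, norm_inv, Complex.norm_real,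
    Real.norm_eq_abs, abs_of_pos (by linarith : (0:ℝ) < 2*1 + B)]
  rw [inv_le_one_iff₀]
  right; linarith

lemma TPestimate {B : ℝ} (hB : 0 ≤ B) (n : ℕ) (hn : 1 ≤ n) {g : ℝ → ℂ} {M S : ℝ}
    (hg : ContDiffOn ℝ ∞ g (Ioi 0)) (hM : 0 ≤ M) (hS : 1 ≤ S) (hvan : ∀ x, S < x → g x = 0)
    (hbd : ∀ j ≤ n, ∀ x : ℝ, 1 ≤ x → ‖iteratedDeriv j g x‖ ≤ M * x ^ ((n:ℝ)/2 - j)) :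
    ‖∫ x in Ioi (1:ℝ), TPph B x * g x‖ ≤ ((n : ℝ) + 2) * (TPK n : ℝ)^n * M := by
  have hiter := TPL_iter hB n hg hM hvan hbd
  have hKn : (1:ℝ) ≤ (TPK n : ℝ) := by exact_mod_cast TPK_one_le n
  rw [TPibp_iter hB hg hS hvan n]
  have hbound_k : ∀ k, k ≤ n → ‖((TPL B)^[k] g) 1‖ ≤ (TPK n : ℝ)^n * M := by
    intro k hk
    have := (hiter k hk).2.2 0 (by omega) 1 le_rfl
    simp only [iteratedDeriv_zero, Nat.cast_zero, Real.one_rpow, mul_one] at this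
    refine le_trans this ?_
    exact mul_le_mul_of_nonneg_right (pow_le_pow_right₀ hKn hk) hM
  have hsum : ‖∑ k ∈ Finset.range n, -(TPph B 1 * (TPpsi B 1 * ((TPL B)^[k] g) 1))‖
      ≤ (n : ℝ) * ((TPK n : ℝ)^n * M) := by
    refine le_trans (norm_sum_le _ _) ?_
    have : ∀ k ∈ Finset.range n,
        ‖-(TPph B 1 * (TPpsi B 1 * ((TPL B)^[k] g) 1))‖ ≤ (TPK n : ℝ)^n * M := by
      intro k hk
      rw [norm_neg, norm_mul, TPph_norm, one_mul, norm_mul]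
      have h' : ‖TPpsi B 1‖ * ‖((TPL B)^[k] g) 1‖ ≤ 1 * ((TPK n : ℝ)^n * M) :=
        mul_le_mul (TPpsi_one_norm hB) (hbound_k k (Finset.mem_range.mp hk).le)
          (norm_nonneg _) one_pos.le
      rwa [one_mul] at h'
    refine le_trans (Finset.sum_le_sum this) ?_
    rw [Finset.sum_const, Finset.card_range, nsmul_eq_mul]
  have hint_bound : ‖∫ x in Ioi (1:ℝ), TPph B x * ((TPL B)^[n] g) x‖
      ≤ 2 * ((TPK n : ℝ)^n * M) := by
    have hgn := (hiter n le_rfl).2.2 0 (by omega)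
    have hptw : ∀ x ∈ Ioi (1:ℝ), ‖TPph B x * ((TPL B)^[n] g) x‖
        ≤ (TPK n : ℝ)^n * M * x ^ (-3/2 : ℝ) := by
      intro x hx
      have hx1 : (1:ℝ) ≤ x := le_of_lt hx
      rw [norm_mul, TPph_norm, one_mul]
      have h1 := hgn x hx1
      simp only [Nat.cast_zero, sub_zero] at h1
      refine le_trans h1 ?_
      apply mul_le_mul_of_nonneg_left _ (by positivity)
      apply Real.rpow_le_rpow_of_exponent_le hx1
      have : (1:ℝ) ≤ (n:ℝ) := by exact_mod_cast hn
      linarith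
    have hintg : IntegrableOn (fun x : ℝ => (TPK n : ℝ)^n * M * x ^ (-3/2 : ℝ)) (Ioi 1) :=
      (integrableOn_Ioi_rpow_of_lt (by norm_num) one_pos).const_mul _
    have := norm_integral_le_of_norm_le (μ := volume.restrict (Ioi 1)) hintg
      ((ae_restrict_iff' measurableSet_Ioi).mpr (Filter.Eventually.of_forall hptw))
    refine le_trans this ?_
    rw [MeasureTheory.integral_const_mul, integral_Ioi_rpow_of_lt (by norm_num) one_pos,
      Real.one_rpow]
    ring_nf
    exact le_rfl
  refine le_trans (norm_add_le _ _) (le_trans (add_le_add hsum hint_bound) (le_of_eq (by ring)))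

lemma TPpow_iteratedDeriv (m k : ℕ) : iteratedDeriv k (fun x : ℝ => (x:ℂ)^m)
    = fun x : ℝ => (m.descFactorial k : ℂ) * (x:ℂ)^(m-k) := by
  induction k with
  | zero => simp
  | succ k ih =>
    rw [iteratedDeriv_succ, ih]
    funext x
    have h1 : HasDerivAt (fun y : ℝ => ((y:ℂ))^(m-k))
        (((m-k : ℕ) : ℂ) * (x:ℂ)^(m-k-1)) x := by
      exact_mod_cast (hasDerivAt_pow (m-k) (x:ℂ)).comp_ofReal
    have h2 := (h1.const_mul ((m.descFactorial k : ℂ))).deriv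
    rw [h2, Nat.descFactorial_succ]
    have : m - (k+1) = m - k - 1 := by omega
    rw [this]
    push_cast
    ring

lemma TPpow_bound (m k : ℕ) {x : ℝ} (hx : 1 ≤ x) :
    ‖iteratedDeriv k (fun x : ℝ => (x:ℂ)^m) x‖
      ≤ (m.descFactorial k : ℝ) * x ^ ((m:ℝ) - k) := by
  have hx0 : (0:ℝ) < x := lt_of_lt_of_le one_pos hx
  rw [TPpow_iteratedDeriv]
  simp only [norm_mul, norm_pow, Complex.norm_natCast, Complex.norm_real, Real.norm_eq_abs,
    abs_of_pos hx0]
  rcases le_or_gt k m with hkm | hkm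
  · rw [← Real.rpow_natCast x (m-k), Nat.cast_sub hkm]
  · rw [Nat.descFactorial_eq_zero_iff_lt.mpr hkm]
    simp

def TPX (m : ℕ) : ℝ := (TPchi_global_bound m).choose
lemma TPX_one_le (m : ℕ) : 1 ≤ TPX m := (TPchi_global_bound m).choose_spec.1
lemma TPX_bound (m : ℕ) (y : ℝ) : ‖iteratedDeriv m TPchi y‖ ≤ TPX m :=
  (TPchi_global_bound m).choose_spec.2 y

lemma TPnorm_iteratedDeriv_ofReal (h : ℝ → ℝ) (hh : ContDiff ℝ ∞ h) (m : ℕ) (x : ℝ) :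
    ‖iteratedDeriv m (fun y => ((h y : ℝ) : ℂ)) x‖ = ‖iteratedDeriv m h x‖ := by
  rw [← norm_iteratedFDeriv_eq_norm_iteratedDeriv, ← norm_iteratedFDeriv_eq_norm_iteratedDeriv]
  exact Complex.ofRealLI.norm_iteratedFDeriv_comp_left hh.contDiffAt (by exact_mod_cast le_top)

lemma TPw_bound {R : ℝ} (hR : 1 ≤ R) (m : ℕ) {x : ℝ} (hx : 1 ≤ x) :
    ‖iteratedDeriv m (fun y : ℝ => TPchi (y/R)) x‖ ≤ 2^m * TPX m * x ^ (-(m:ℝ)) := by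
  have hR0 : (0:ℝ) < R := lt_of_lt_of_le one_pos hR
  have hx0 : (0:ℝ) < x := lt_of_lt_of_le one_pos hx
  have hfun : (fun y : ℝ => TPchi (y/R)) = (fun y => TPchi (R⁻¹ * y)) := by
    funext y; rw [div_eq_inv_mul]
  rw [hfun, iteratedDeriv_comp_const_mul (TPchi_contDiff.of_le (by exact_mod_cast le_top)) R⁻¹]
  rw [Real.norm_eq_abs, abs_mul, _root_.abs_pow, abs_of_pos (inv_pos.mpr hR0)]
  rcases le_or_gt x (2*R) with hx2R | hx2R
  · have h1 : R⁻¹ ≤ 2/x := by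
      rw [inv_le_iff_one_le_mul₀ hR0, div_mul_eq_mul_div, le_div_iff₀ hx0]
      linarith
    have h2 : R⁻¹^m ≤ (2/x)^m := pow_le_pow_left₀ (inv_pos.mpr hR0).le h1 m
    calc R⁻¹^m * |iteratedDeriv m TPchi (R⁻¹ * x)| ≤ (2/x)^m * TPX m := by
          apply mul_le_mul h2 _ (abs_nonneg _) (by positivity)
          rw [← Real.norm_eq_abs]
          exact TPX_bound m _
      _ = 2^m * TPX m * x ^ (-(m:ℝ)) := by
          rw [div_pow, Real.rpow_neg hx0.le, Real.rpow_natCast]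
          field_simp
  · have h2R : 2 < R⁻¹ * x := by
      rw [inv_mul_eq_div, lt_div_iff₀ hR0]
      linarith
    have hz : iteratedDeriv m TPchi (R⁻¹ * x) = 0 := by
      rcases Nat.eq_zero_or_pos m with rfl | hm
      · simpa using TPchi_zero h2R.le
      · exact TPchi_deriv_zero hm.ne' (Or.inr h2R)
    rw [hz, abs_zero, mul_zero]
    have h1 : (1:ℝ) ≤ TPX m := TPX_one_le m
    positivity

def TPE1 (n : ℕ) (Cc : ℕ → ℝ) (i : ℕ) : ℝ :=
  ∑ l ∈ Finset.range (i+1), (i.choose l : ℝ) * (n.descFactorial l : ℝ) * |Cc (i - l)|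

lemma TPE1_nonneg (n : ℕ) (Cc : ℕ → ℝ) (i : ℕ) : 0 ≤ TPE1 n Cc i :=
  Finset.sum_nonneg fun l _ => by positivity

def TPE (n : ℕ) (Cc : ℕ → ℝ) (j : ℕ) : ℝ :=
  ∑ m ∈ Finset.range (j+1), (j.choose m : ℝ) * TPE1 n Cc m * (2^(j-m) * TPX (j-m))

lemma TPE_nonneg (n : ℕ) (Cc : ℕ → ℝ) (j : ℕ) : 0 ≤ TPE n Cc j :=
  Finset.sum_nonneg fun m _ => by
    have := TPE1_nonneg n Cc m
    have := TPX_one_le (j - m)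
    positivity

lemma TPu_bound (n : ℕ) (Cc : ℕ → ℝ) {t : ℝ} (ht : 0 < t) {a : ℝ → ℂ}
    (ha : ContDiff ℝ ∞ a)
    (hbd : ∀ (j : ℕ) (x : ℝ), 1 ≤ x →
      ‖iteratedDeriv j a x‖ ≤ Cc j * t ^ ((n:ℝ)/4) * x ^ (-(n:ℝ)/2 - j))
    (i : ℕ) {x : ℝ} (hx : 1 ≤ x) :
    ‖iteratedDeriv i (fun y : ℝ => (y:ℂ)^n * a y) x‖
      ≤ TPE1 n Cc i * t ^ ((n:ℝ)/4) * x ^ ((n:ℝ)/2 - i) := by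
  have hx0 : (0:ℝ) < x := lt_of_lt_of_le one_pos hx
  have hpow : ContDiff ℝ ∞ (fun y : ℝ => (y:ℂ)^n) := Complex.ofRealCLM.contDiff.pow n
  rw [← norm_iteratedFDeriv_eq_norm_iteratedDeriv]
  refine le_trans (norm_iteratedFDeriv_mul_le hpow ha x (by exact_mod_cast le_top)) ?_
  have hterm : ∀ l ∈ Finset.range (i+1),
      (i.choose l : ℝ) * ‖iteratedFDeriv ℝ l (fun y : ℝ => (y:ℂ)^n) x‖ *
        ‖iteratedFDeriv ℝ (i-l) a x‖
      ≤ ((i.choose l : ℝ) * (n.descFactorial l : ℝ) * |Cc (i - l)|)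
          * t ^ ((n:ℝ)/4) * x ^ ((n:ℝ)/2 - i) := by
    intro l hl
    have hli : l ≤ i := Nat.lt_succ_iff.mp (Finset.mem_range.mp hl)
    rw [norm_iteratedFDeriv_eq_norm_iteratedDeriv, norm_iteratedFDeriv_eq_norm_iteratedDeriv]
    have h1 := TPpow_bound n l hx
    have h2 : ‖iteratedDeriv (i-l) a x‖
        ≤ |Cc (i-l)| * t ^ ((n:ℝ)/4) * x ^ (-(n:ℝ)/2 - ((i-l : ℕ) : ℝ)) := by
      refine le_trans (hbd (i-l) x hx) ?_
      apply mul_le_mul_of_nonneg_right _ (by positivity)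
      apply mul_le_mul_of_nonneg_right (le_abs_self _) (by positivity)
    calc (i.choose l : ℝ) * ‖iteratedDeriv l (fun y : ℝ => (y:ℂ)^n) x‖ *
          ‖iteratedDeriv (i-l) a x‖
        ≤ (i.choose l : ℝ) * ((n.descFactorial l : ℝ) * x ^ ((n:ℝ) - l)) *
          (|Cc (i-l)| * t ^ ((n:ℝ)/4) * x ^ (-(n:ℝ)/2 - ((i-l : ℕ) : ℝ))) := by
          apply mul_le_mul (mul_le_mul_of_nonneg_left h1 (by positivity)) h2 (norm_nonneg _)
          positivity
      _ = ((i.choose l : ℝ) * (n.descFactorial l : ℝ) * |Cc (i - l)|) * t ^ ((n:ℝ)/4)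
            * (x ^ ((n:ℝ) - l) * x ^ (-(n:ℝ)/2 - ((i-l : ℕ) : ℝ))) := by ring
      _ = ((i.choose l : ℝ) * (n.descFactorial l : ℝ) * |Cc (i - l)|) * t ^ ((n:ℝ)/4)
            * x ^ ((n:ℝ)/2 - i) := by
          rw [← Real.rpow_add hx0]
          congr 1
          rw [Nat.cast_sub hli]
          ring
  refine le_trans (Finset.sum_le_sum hterm) ?_
  rw [← Finset.sum_mul, ← Finset.sum_mul]
  exact le_rfl

lemma TPg_bound (n : ℕ) (Cc : ℕ → ℝ) {t : ℝ} (ht : 0 < t) {a : ℝ → ℂ}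
    (ha : ContDiff ℝ ∞ a)
    (hbd : ∀ (j : ℕ) (x : ℝ), 1 ≤ x →
      ‖iteratedDeriv j a x‖ ≤ Cc j * t ^ ((n:ℝ)/4) * x ^ (-(n:ℝ)/2 - j))
    {R : ℝ} (hR : 1 ≤ R) (j : ℕ) {x : ℝ} (hx : 1 ≤ x) :
    ‖iteratedDeriv j (fun y : ℝ => ((y:ℂ)^n * a y) * ((TPchi (y/R) : ℝ) : ℂ)) x‖
      ≤ TPE n Cc j * t ^ ((n:ℝ)/4) * x ^ ((n:ℝ)/2 - j) := by
  have hx0 : (0:ℝ) < x := lt_of_lt_of_le one_pos hx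
  have hR0 : (0:ℝ) < R := lt_of_lt_of_le one_pos hR
  have hpow : ContDiff ℝ ∞ (fun y : ℝ => (y:ℂ)^n) := Complex.ofRealCLM.contDiff.pow n
  have hu : ContDiff ℝ ∞ (fun y : ℝ => (y:ℂ)^n * a y) := hpow.mul ha
  have hwr : ContDiff ℝ ∞ (fun y : ℝ => TPchi (y/R)) :=
    TPchi_contDiff.comp (contDiff_id.div_const R)
  have hw : ContDiff ℝ ∞ (fun y : ℝ => ((TPchi (y/R) : ℝ) : ℂ)) :=
    Complex.ofRealCLM.contDiff.comp hwr
  rw [← norm_iteratedFDeriv_eq_norm_iteratedDeriv]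
  refine le_trans (norm_iteratedFDeriv_mul_le hu hw x (by exact_mod_cast le_top)) ?_
  have hterm : ∀ m ∈ Finset.range (j+1),
      (j.choose m : ℝ) * ‖iteratedFDeriv ℝ m (fun y : ℝ => (y:ℂ)^n * a y) x‖ *
        ‖iteratedFDeriv ℝ (j-m) (fun y : ℝ => ((TPchi (y/R) : ℝ) : ℂ)) x‖
      ≤ ((j.choose m : ℝ) * TPE1 n Cc m * (2^(j-m) * TPX (j-m)))
          * t ^ ((n:ℝ)/4) * x ^ ((n:ℝ)/2 - j) := by
    intro m hm
    have hmj : m ≤ j := Nat.lt_succ_iff.mp (Finset.mem_range.mp hm)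
    rw [norm_iteratedFDeriv_eq_norm_iteratedDeriv, norm_iteratedFDeriv_eq_norm_iteratedDeriv]
    have h1 := TPu_bound n Cc ht ha hbd m hx
    have h2 : ‖iteratedDeriv (j-m) (fun y : ℝ => ((TPchi (y/R) : ℝ) : ℂ)) x‖
        ≤ 2^(j-m) * TPX (j-m) * x ^ (-(((j-m):ℕ):ℝ)) := by
      rw [TPnorm_iteratedDeriv_ofReal _ hwr]
      exact TPw_bound hR (j-m) hx
    have he1 := TPE1_nonneg n Cc m
    have he2 := TPX_one_le (j-m)
    calc (j.choose m : ℝ) * ‖iteratedDeriv m (fun y : ℝ => (y:ℂ)^n * a y) x‖ *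
          ‖iteratedDeriv (j-m) (fun y : ℝ => ((TPchi (y/R) : ℝ) : ℂ)) x‖
        ≤ (j.choose m : ℝ) * (TPE1 n Cc m * t ^ ((n:ℝ)/4) * x ^ ((n:ℝ)/2 - m)) *
            (2^(j-m) * TPX (j-m) * x ^ (-(((j-m):ℕ):ℝ))) := by
          apply mul_le_mul (mul_le_mul_of_nonneg_left h1 (by positivity)) h2 (norm_nonneg _)
          positivity
      _ = ((j.choose m : ℝ) * TPE1 n Cc m * (2^(j-m) * TPX (j-m))) * t ^ ((n:ℝ)/4)
            * (x ^ ((n:ℝ)/2 - m) * x ^ (-(((j-m):ℕ):ℝ))) := by ring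
      _ = ((j.choose m : ℝ) * TPE1 n Cc m * (2^(j-m) * TPX (j-m))) * t ^ ((n:ℝ)/4)
            * x ^ ((n:ℝ)/2 - j) := by
          rw [← Real.rpow_add hx0]
          congr 1
          rw [Nat.cast_sub hmj]
          ring
  refine le_trans (Finset.sum_le_sum hterm) ?_
  rw [← Finset.sum_mul, ← Finset.sum_mul]
  exact le_rfl

/-- The `T_+` estimate: for `n ≥ 1`, `D ≥ 0`, `0 < t ≤ 1`, and a smooth amplitude `a`
with `|a^{(j)}(λ)| ≤ C_j t^{n/4} λ^{-n/2-j}` for `λ ≥ 1`,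
`|∫_1^∞ e^{i(λ² + D t^{-1/2} λ)} λ^n a(λ) dλ| ≤ C (1 + D)^{n/2}`. -/
theorem T_plus_nonstationary_phase_estimate (n : ℕ) (hn : 1 ≤ n) (Cc : ℕ → ℝ) :
    ∃ C : ℝ, 0 < C ∧ ∀ (t D : ℝ) (a : ℝ → ℂ), 0 < t → t ≤ 1 → 0 ≤ D →
      ContDiff ℝ (⊤ : ℕ∞) a →
      (∀ (j : ℕ) (lam : ℝ), 1 ≤ lam →
        ‖iteratedDeriv j a lam‖ ≤ Cc j * t ^ ((n : ℝ) / 4) * lam ^ (-(n : ℝ) / 2 - j)) →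
      ‖∫ lam in Set.Ioi (1 : ℝ),
          Complex.exp (Complex.I * ((lam : ℂ) ^ 2
              + (D : ℂ) * ((t ^ (-(1 : ℝ) / 2) : ℝ) : ℂ) * (lam : ℂ)))
            * (lam : ℂ) ^ n * a lam‖
        ≤ C * (1 + D) ^ ((n : ℝ) / 2) := by
  classical
  set Etot : ℝ := ∑ j ∈ Finset.range (n+1), TPE n Cc j with hEtot_def
  have hEtot : 0 ≤ Etot := Finset.sum_nonneg fun j _ => TPE_nonneg n Cc j
  have hKn : (1:ℝ) ≤ (TPK n : ℝ) := by exact_mod_cast TPK_one_le n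
  refine ⟨((n:ℝ)+2) * (TPK n : ℝ)^n * Etot + 1, by positivity, ?_⟩
  intro t D a ht ht1 hD ha hbd
  have ha' : ContDiff ℝ ∞ a := ha.of_le (by simp)
  set B : ℝ := D * t ^ (-(1:ℝ)/2) with hB_def
  have hB : 0 ≤ B := mul_nonneg hD (Real.rpow_nonneg ht.le _)
  have hph_eq : ∀ x : ℝ,
      Complex.exp (Complex.I * ((x:ℂ)^2 + (D:ℂ) * ((t ^ (-(1:ℝ)/2) : ℝ) : ℂ) * (x:ℂ)))
        = TPph B x := by
    intro x
    rw [TPph]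
    congr 1
    rw [hB_def]
    push_cast
    ring
  have hEq : (∫ lam in Ioi (1:ℝ),
      Complex.exp (Complex.I * ((lam : ℂ) ^ 2
          + (D : ℂ) * ((t ^ (-(1 : ℝ) / 2) : ℝ) : ℂ) * (lam : ℂ)))
        * (lam : ℂ) ^ n * a lam)
      = ∫ x in Ioi (1:ℝ), TPph B x * ((x:ℂ)^n * a x) := by
    apply setIntegral_congr_fun measurableSet_Ioi
    intro x _
    show Complex.exp (Complex.I * ((x:ℂ)^2 + (D:ℂ) * ((t ^ (-(1:ℝ)/2) : ℝ) : ℂ) * (x:ℂ)))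
        * (x:ℂ)^n * a x = TPph B x * ((x:ℂ)^n * a x)
    rw [hph_eq x, mul_assoc]
  rw [hEq]
  have hpos : (0:ℝ) < (1 + D) ^ ((n:ℝ)/2) := Real.rpow_pos_of_pos (by linarith) _
  by_cases hI : IntegrableOn (fun x => TPph B x * ((x:ℂ)^n * a x)) (Ioi 1) volume
  · set M : ℝ := Etot * t ^ ((n:ℝ)/4) with hM_def
    have htq : (0:ℝ) < t ^ ((n:ℝ)/4) := Real.rpow_pos_of_pos ht _
    have hM : 0 ≤ M := mul_nonneg hEtot htq.le
    have hpow : ContDiff ℝ ∞ (fun y : ℝ => (y:ℂ)^n) := Complex.ofRealCLM.contDiff.pow n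
    have hu : ContDiff ℝ ∞ (fun y : ℝ => (y:ℂ)^n * a y) := hpow.mul ha'
    have hub : ∀ R : ℝ, 1 ≤ R →
        ‖∫ x in Ioi (1:ℝ), TPph B x * (((x:ℂ)^n * a x) * ((TPchi (x/R) : ℝ) : ℂ))‖
          ≤ ((n:ℝ)+2) * (TPK n : ℝ)^n * M := by
      intro R hR
      have hR0 : (0:ℝ) < R := lt_of_lt_of_le one_pos hR
      have hwr : ContDiff ℝ ∞ (fun y : ℝ => TPchi (y/R)) :=
        TPchi_contDiff.comp (contDiff_id.div_const R)
      have hw : ContDiff ℝ ∞ (fun y : ℝ => ((TPchi (y/R) : ℝ) : ℂ)) :=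
        Complex.ofRealCLM.contDiff.comp hwr
      apply TPestimate hB n hn (S := 2*R) ((hu.mul hw).contDiffOn) hM (by linarith)
      · intro x hx
        have h2 : (2:ℝ) ≤ x / R := by
          rw [le_div_iff₀ hR0]; linarith
        simp [TPchi_zero h2]
      · intro j hj x hx
        refine le_trans (TPg_bound n Cc ht ha' hbd hR j hx) ?_
        have hle : TPE n Cc j ≤ Etot := by
          rw [hEtot_def]
          exact Finset.single_le_sum (f := fun j => TPE n Cc j)
            (fun i _ => TPE_nonneg n Cc i) (Finset.mem_range.mpr (by omega))
        rw [hM_def]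
        apply mul_le_mul_of_nonneg_right _ (by positivity)
        rw [mul_comm Etot _, mul_comm (TPE n Cc j) _]
        exact mul_le_mul_of_nonneg_left hle htq.le
    have hlim : Tendsto
        (fun R : ℝ => ∫ x in Ioi (1:ℝ), TPph B x * (((x:ℂ)^n * a x) * ((TPchi (x/R) : ℝ) : ℂ)))
        atTop (nhds (∫ x in Ioi (1:ℝ), TPph B x * ((x:ℂ)^n * a x))) := by
      apply tendsto_integral_filter_of_dominated_convergence
        (bound := fun x => ‖TPph B x * ((x:ℂ)^n * a x)‖)
      · refine Eventually.of_forall fun R => ?_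
        apply Continuous.aestronglyMeasurable
        refine (TPph_continuous B).mul (((Complex.continuous_ofReal.pow n).mul
          ha'.continuous).mul ?_)
        exact Complex.continuous_ofReal.comp
          (TPchi_contDiff.continuous.comp (continuous_id.div_const R))
      · refine Eventually.of_forall fun R => ?_
        refine (ae_restrict_iff' measurableSet_Ioi).mpr (Eventually.of_forall fun x _ => ?_)
        calc ‖TPph B x * (((x:ℂ)^n * a x) * ((TPchi (x/R) : ℝ) : ℂ))‖
            = ‖TPph B x * ((x:ℂ)^n * a x)‖ * ‖((TPchi (x/R) : ℝ) : ℂ)‖ := by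
              rw [← norm_mul]; ring_nf
          _ ≤ ‖TPph B x * ((x:ℂ)^n * a x)‖ * 1 := by
              apply mul_le_mul_of_nonneg_left _ (norm_nonneg _)
              rw [Complex.norm_real]
              exact TPchi_mem (x/R)
          _ = ‖TPph B x * ((x:ℂ)^n * a x)‖ := mul_one _
      · exact hI.norm
      · refine (ae_restrict_iff' measurableSet_Ioi).mpr (Eventually.of_forall fun x hx => ?_)
        have hx0 : (0:ℝ) < x := lt_trans one_pos hx
        apply Tendsto.congr' _ tendsto_const_nhds
        filter_upwards [eventually_ge_atTop x] with R hRx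
        have hR0 : (0:ℝ) < R := lt_of_lt_of_le hx0 hRx
        have : x / R ≤ 1 := (div_le_one hR0).mpr hRx
        rw [TPchi_one this]
        push_cast
        ring
    have hfinal : ‖∫ x in Ioi (1:ℝ), TPph B x * ((x:ℂ)^n * a x)‖
        ≤ ((n:ℝ)+2) * (TPK n : ℝ)^n * M :=
      le_of_tendsto hlim.norm ((eventually_ge_atTop 1).mono fun R hR => hub R hR)
    refine le_trans hfinal ?_
    have h1 : t ^ ((n:ℝ)/4) ≤ 1 := Real.rpow_le_one ht.le ht1 (by positivity)
    have h2 : (1:ℝ) ≤ (1+D) ^ ((n:ℝ)/2) := by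
      calc (1:ℝ) = 1 ^ ((n:ℝ)/2) := (Real.one_rpow _).symm
        _ ≤ (1+D) ^ ((n:ℝ)/2) := Real.rpow_le_rpow one_pos.le (by linarith) (by positivity)
    have hKpow : (0:ℝ) ≤ ((n:ℝ)+2) * (TPK n : ℝ)^n := by positivity
    calc ((n:ℝ)+2) * (TPK n : ℝ)^n * M
        = (((n:ℝ)+2) * (TPK n : ℝ)^n * Etot) * t ^ ((n:ℝ)/4) := by rw [hM_def]; ring
      _ ≤ (((n:ℝ)+2) * (TPK n : ℝ)^n * Etot) * 1 :=
          mul_le_mul_of_nonneg_left h1 (by positivity)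
      _ ≤ (((n:ℝ)+2) * (TPK n : ℝ)^n * Etot + 1) * 1 := by linarith
      _ ≤ (((n:ℝ)+2) * (TPK n : ℝ)^n * Etot + 1) * ((1+D) ^ ((n:ℝ)/2)) := by
          apply mul_le_mul_of_nonneg_left h2 (by positivity)
  · rw [integral_undef hI]
    rw [norm_zero]
    positivity
end
end
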